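/- Dual form of the abstain game: for every α > 0, V_abst = sup_{z ∈ Z} (1/n)·∑_{i=1}^n min( α, (1/2)·(1 - |z_i|) ). -/

import Mathlib

open Finset

/-- Expected loss of the abstain game with abstention cost `α`,
abstain probabilities `p`, prediction `g`, and labels `z`. -/
noncomputable def Labst (n : ℕ) (α : ℝ) (p g z : ℕ → ℝ) : ℝ :=
  (1 / (n : ℝ)) * ∑ i ∈ Icc 1 n,
    (p i * α + (1 / 2) * (1 - p i) * (1 - g i * z i))

/-- The value of the abstain game. -/
noncomputable def Vabst (n : ℕ) (a : ℕ → ℝ) (lam α : ℝ) : ℝ :=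
  sInf {x : ℝ | ∃ p : ℕ → ℝ, (∀ i ∈ Icc 1 n, 0 ≤ p i ∧ p i ≤ 1) ∧
    ∃ g : ℕ → ℝ, (∀ i ∈ Icc 1 n, |g i| ≤ 1) ∧
      x = sSup {y : ℝ | ∃ z : ℕ → ℝ, (∀ i ∈ Icc 1 n, |z i| ≤ 1) ∧
        lam ≤ (1 / (n : ℝ)) * ∑ i ∈ Icc 1 n, z i * a i ∧
        y = Labst n α p g z}}

/-- The optimal abstention probability for dual multiplier value `m`. -/
noncomputable def pOpt (α m : ℝ) : ℝ := if α ≤ 1/2 then max 0 (1 - 2*m) else 0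

lemma pOpt_mem (α m : ℝ) (hm : 0 ≤ m) : 0 ≤ pOpt α m ∧ pOpt α m ≤ 1 := by
  unfold pOpt; split
  · constructor
    · exact le_max_left _ _
    · rw [max_le_iff]; constructor <;> linarith
  · norm_num

/-- Key scalar inequality: per-coordinate loss bound in the three regimes. -/
lemma abstKey (α m t : ℝ) (hα : 0 < α)
    (h : (t = 1 ∧ 1/2 ≤ m) ∨ (0 ≤ m ∧ m ≤ 1/2 ∧ t = max 0 (1 - 2*α)) ∨
      (m = 1/2 ∧ max 0 (1-2*α) ≤ t ∧ t ≤ 1) ∨ (m = 0 ∧ 0 ≤ t ∧ t ≤ max 0 (1-2*α))) :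
    pOpt α m * α + max ((1 - pOpt α m)/2) m ≤ min α ((1/2)*(1-t)) + m * t := by
  unfold pOpt
  rcases h with ⟨ht, hm⟩ | ⟨hm0, hm, ht⟩ | ⟨hm, ht0, ht1⟩ | ⟨hm, ht0, ht1⟩
  · -- t = 1, m ≥ 1/2
    subst ht
    have hp : (if α ≤ 1/2 then max 0 (1 - 2*m) else 0) = 0 := by
      split
      · rw [max_eq_left]; linarith
      · rfl
    rw [hp]
    have h1 : min α ((1/2)*(1-(1:ℝ))) = 0 := by
      rw [show (1/2)*(1-(1:ℝ)) = 0 by ring, min_eq_right hα.le]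
    rw [h1]
    have h2 : max ((1-(0:ℝ))/2) m = m := max_eq_right (by linarith)
    rw [h2]; linarith
  · -- 0 ≤ m ≤ 1/2, t = max 0 (1-2α)
    by_cases hc : α ≤ 1/2
    · rw [if_pos hc]
      have hb : max (0:ℝ) (1-2*α) = 1-2*α := max_eq_right (by linarith)
      rw [hb] at ht; subst ht
      have hp : max (0:ℝ) (1-2*m) = 1-2*m := max_eq_right (by linarith)
      rw [hp]
      have hmax : max ((1-(1-2*m))/2) m = m := by
        rw [max_eq_right]; rw [show (1-(1-2*m))/2 = m by ring]
      rw [hmax]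
      have hmin : min α ((1/2)*(1-(1-2*α))) = α := by
        rw [min_eq_left]; linarith
      rw [hmin]; nlinarith
    · rw [if_neg hc]
      push_neg at hc
      have hb : max (0:ℝ) (1-2*α) = 0 := max_eq_left (by linarith)
      rw [hb] at ht; subst ht
      have hmin : min α ((1/2)*(1-(0:ℝ))) = 1/2 := by
        rw [min_eq_right (by linarith)]; norm_num
      rw [hmin]
      have hmax : max ((1-(0:ℝ))/2) m = 1/2 := by
        rw [max_eq_left (by linarith)]; norm_num
      rw [hmax]; norm_num
  · -- m = 1/2, β ≤ t ≤ 1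
    subst hm
    have hp : (if α ≤ 1/2 then max 0 (1 - 2*(1/2:ℝ)) else 0) = 0 := by
      split
      · norm_num
      · rfl
    rw [hp]
    have hmax : max ((1-(0:ℝ))/2) (1/2) = 1/2 := by norm_num
    rw [hmax]
    rcases le_or_gt ((1/2)*(1-t)) α with hca | hca
    · rw [min_eq_right hca]; linarith
    · rw [min_eq_left hca.le]
      have : (1:ℝ)-2*α ≤ t := le_trans (le_max_right _ _) ht0
      linarith
  · -- m = 0, 0 ≤ t ≤ β
    subst hm
    by_cases hc : α ≤ 1/2
    · rw [if_pos hc]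
      have hp : max (0:ℝ) (1-2*0) = 1 := by norm_num
      rw [hp]
      have hb : max (0:ℝ) (1-2*α) = 1-2*α := max_eq_right (by linarith)
      rw [hb] at ht1
      have hmin : min α ((1/2)*(1-t)) = α := by rw [min_eq_left]; linarith
      have hmax : max ((1-(1:ℝ))/2) 0 = 0 := by norm_num
      rw [hmin, hmax]; linarith
    · rw [if_neg hc]
      push_neg at hc
      have hb : max (0:ℝ) (1-2*α) = 0 := max_eq_left (by linarith)
      rw [hb] at ht1
      have ht : t = 0 := le_antisymm ht1 ht0
      subst ht
      have hmin : min α ((1/2)*(1-(0:ℝ))) = 1/2 := by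
        rw [min_eq_right (by linarith)]; norm_num
      rw [hmin]
      have hmax : max ((1-(0:ℝ))/2) 0 = 1/2 := by norm_num
      rw [hmax]; norm_num
/-- Reduction: the adversary's best response per coordinate. -/
lemma abstReduce (α μ aa p s : ℝ) (hμ : 0 ≤ μ) (hp0 : 0 ≤ p) (hp1 : p ≤ 1) (hs : |s| ≤ 1) :
    p*α + (1/2)*(1-p)*(1 - ((if aa < 0 then (-1:ℝ) else 1) * min 1 (μ*|aa| / ((1-p)/2)))*s)
      + μ*aa*s
      ≤ p*α + max ((1-p)/2) (μ*|aa|) := by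
  set r : ℝ := (1-p)/2 with hr
  set m : ℝ := μ*|aa| with hm
  have hr0 : 0 ≤ r := by rw [hr]; linarith
  have hm0 : 0 ≤ m := mul_nonneg hμ (abs_nonneg _)
  set sg : ℝ := if aa < 0 then (-1:ℝ) else 1 with hsg
  have hsga : sg * |aa| = aa := by
    rw [hsg]; rcases lt_or_ge aa 0 with h | h
    · rw [if_pos h, abs_of_neg h]; ring
    · rw [if_neg (not_lt.mpr h), abs_of_nonneg h]; ring
  have hsgs : sg * s ≤ 1 := by
    have : |sg * s| ≤ 1 := by
      rw [abs_mul]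
      have : |sg| = 1 := by rw [hsg]; split <;> simp
      rw [this, one_mul]; exact hs
    exact (abs_le.mp this).2
  have hrg : r * min 1 (m / r) = min r m := by
    rcases eq_or_lt_of_le hr0 with h0 | h0
    · rw [← h0]; simp [hm0]
    · rcases le_or_gt m r with h | h
      · rw [min_eq_right h, min_eq_right (by rw [div_le_one h0]; exact h)]
        field_simp
      · rw [min_eq_left h.le, min_eq_left (by rw [le_div_iff₀ h0]; linarith), mul_one]
  have key : (1/2)*(1-p)*(1 - (sg * min 1 (m / r))*s) + μ*aa*s
      = r + (sg*s) * (m - min r m) := by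
    have h1 : (1/2)*(1-p) = r := by rw [hr]; ring
    have h2 : μ*aa = sg * m := by
      rw [hm, show sg*(μ*|aa|) = μ*(sg*|aa|) by ring, hsga]
    rw [h1, h2]
    have : r * ((sg * min 1 (m / r)) * s) = (sg * s) * (r * min 1 (m/r)) := by ring
    calc r * (1 - (sg * min 1 (m / r))*s) + sg*m*s
        = r - (sg*s) * (r * min 1 (m/r)) + (sg*s)*m := by ring
      _ = r + (sg*s) * (m - min r m) := by rw [hrg]; ring
  have h3 : (sg*s) * (m - min r m) ≤ m - min r m := by
    have : 0 ≤ m - min r m := by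
      have := min_le_right r m; linarith
    nlinarith
  have h4 : r + (m - min r m) = max r m := by
    have := min_add_max r m; linarith
  linarith [key, h3, h4]
lemma sum_split3 (f : ℕ → ℝ) (k n : ℕ) (hk1 : 1 ≤ k) (hkn : k ≤ n) :
    ∑ i ∈ Icc 1 n, f i = (∑ i ∈ Icc 1 (k-1), f i) + f k + ∑ i ∈ Icc (k+1) n, f i := by
  have e0 : ∀ m : ℕ, Finset.Icc 1 m = Finset.Ioc 0 m := fun m => by
    ext x; simp [Nat.lt_iff_add_one_le]
  have e1 : Finset.Icc (k+1) n = Finset.Ioc k n := by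
    ext x; simp only [Finset.mem_Icc, Finset.mem_Ioc]; omega
  have h1 : (∑ i ∈ Finset.Ioc 0 (k-1), f i) + ∑ i ∈ Finset.Ioc (k-1) n, f i
      = ∑ i ∈ Finset.Ioc 0 n, f i :=
    Finset.sum_Ioc_consecutive f (Nat.zero_le _) (by omega)
  have h2 : (∑ i ∈ Finset.Ioc (k-1) k, f i) + ∑ i ∈ Finset.Ioc k n, f i
      = ∑ i ∈ Finset.Ioc (k-1) n, f i :=
    Finset.sum_Ioc_consecutive f (by omega) hkn
  have h3 : Finset.Ioc (k-1) k = {k} := by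
    ext x; simp; omega
  rw [e0, e0, e1, ← h1, ← h2, h3, Finset.sum_singleton]
  ring

/-- Existence of the dual multiplier and optimal label magnitudes. -/
lemma abstMuT (n : ℕ) (hn : 1 ≤ n) (a : ℕ → ℝ)
    (hord : ∀ i j : ℕ, 1 ≤ i → i ≤ j → j ≤ n → |a j| ≤ |a i|)
    (lam : ℝ) (hlam_pos : 0 < lam)
    (hlam_le : lam ≤ (1 / (n : ℝ)) * ∑ i ∈ Icc 1 n, |a i|)
    (α : ℝ) (hα : 0 < α) :
    ∃ μ : ℝ, ∃ t : ℕ → ℝ, 0 ≤ μ ∧ (∀ i ∈ Icc 1 n, 0 ≤ t i ∧ t i ≤ 1) ∧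
      (∑ i ∈ Icc 1 n, t i * |a i|) = (n : ℝ) * lam ∧
      (∀ i ∈ Icc 1 n,
        (t i = 1 ∧ 1/2 ≤ μ * |a i|) ∨
        (0 ≤ μ * |a i| ∧ μ * |a i| ≤ 1/2 ∧ t i = max 0 (1 - 2*α)) ∨
        (μ * |a i| = 1/2 ∧ max 0 (1-2*α) ≤ t i ∧ t i ≤ 1) ∨
        (μ * |a i| = 0 ∧ 0 ≤ t i ∧ t i ≤ max 0 (1-2*α))) := by
  classical
  have hN : (0:ℝ) < (n:ℝ) := by exact_mod_cast hn
  set S : ℝ := ∑ i ∈ Icc 1 n, |a i| with hS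
  have hNlam : (0:ℝ) < (n:ℝ) * lam := by positivity
  have hSlam : (n:ℝ) * lam ≤ S := by
    rw [div_mul_eq_mul_div, one_mul] at hlam_le
    calc (n:ℝ)*lam ≤ (n:ℝ)*(S/(n:ℝ)) := by nlinarith
      _ = S := by field_simp
  set β : ℝ := max 0 (1 - 2*α) with hβ
  have hβ0 : 0 ≤ β := le_max_left _ _
  have hβ1 : β < 1 := by
    rw [hβ]; rcases max_cases (0:ℝ) (1-2*α) with ⟨h, _⟩ | ⟨h, _⟩ <;> rw [h] <;> linarith
  rcases le_or_gt ((n:ℝ)*lam) (β * S) with hcase | hcase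
  · -- μ = 0, t constant
    have hS0 : 0 < S := lt_of_lt_of_le hNlam hSlam
    refine ⟨0, fun _ => (n:ℝ)*lam / S, le_refl 0, ?_, ?_, ?_⟩
    · intro i _
      constructor
      · positivity
      · rw [div_le_one hS0]; exact hSlam
    · rw [← Finset.mul_sum, ← hS, div_mul_cancel₀ _ (ne_of_gt hS0)]
    · intro i _
      right; right; right
      refine ⟨by simp, by positivity, ?_⟩
      show (n:ℝ)*lam/S ≤ β
      rw [div_le_iff₀ hS0]
      nlinarith
  · -- μ = 1/(2 A k)
    set F : ℕ → ℝ := fun j => (∑ i ∈ Icc 1 j, |a i|) + β * ∑ i ∈ Icc (j+1) n, |a i|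
      with hF
    have hF0 : F 0 = β * S := by
      rw [hF]; simp [hS]
    have hFn : F n = S := by
      rw [hF]
      have : Finset.Icc (n+1) n = ∅ := by rw [Finset.Icc_eq_empty]; omega
      simp [this, hS]
    have hPn : (n:ℝ)*lam ≤ F n := by rw [hFn]; exact hSlam
    have hex : ∃ j, (n:ℝ)*lam ≤ F j := ⟨n, hPn⟩
    obtain ⟨k, hPk, hmin⟩ : ∃ k, ((n:ℝ)*lam ≤ F k) ∧ ∀ j < k, ¬ ((n:ℝ)*lam ≤ F j) :=
      ⟨Nat.find hex, Nat.find_spec hex, fun j hj => Nat.find_min hex hj⟩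
    have hkn : k ≤ n := by
      by_contra h
      exact hmin n (by omega) hPn
    have hk1 : 1 ≤ k := by
      rcases Nat.eq_zero_or_pos k with h | h
      · exfalso
        rw [h, hF0] at hPk; linarith
      · exact h
    have hFk1 : F (k-1) < (n:ℝ)*lam := by
      have h := hmin (k-1) (by omega)
      linarith [not_le.mp h]
    have htop : ∀ j : ℕ, 1 ≤ j →
        ∑ i ∈ Finset.Icc 1 j, |a i| = (∑ i ∈ Finset.Icc 1 (j-1), |a i|) + |a j| := by
      intro j hj
      obtain ⟨j', rfl⟩ : ∃ j', j = j'+1 := ⟨j-1, by omega⟩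
      rw [Finset.sum_Icc_succ_top (by omega)]
      simp
    have hbot : ∀ j : ℕ, ∑ i ∈ Finset.Icc j n, |a i| = |a j| + ∑ i ∈ Finset.Icc (j+1) n, |a i|
        ∨ n < j := by
      intro j
      rcases le_or_gt j n with h | h
      · left
        have e : Finset.Icc j n = insert j (Finset.Icc (j+1) n) := by
          ext x; simp; omega
        rw [e, Finset.sum_insert (by simp)]
      · right; exact h
    have hstep : F k = F (k-1) + (1-β) * |a k| := by
      rw [hF]
      simp only
      rcases hbot k with h2 | h2
      · rw [htop k hk1, show k-1+1 = k by omega, h2]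
        ring
      · omega
    have hak : 0 < |a k| := by
      have h4 : 0 < (1-β) * |a k| := by
        rw [hstep] at hPk; linarith
      nlinarith [abs_nonneg (a k)]
    set τ : ℝ := β + ((n:ℝ)*lam - F (k-1))/|a k| with hτ
    have hτβ : β ≤ τ := by
      rw [hτ]
      have : 0 ≤ ((n:ℝ)*lam - F (k-1))/|a k| := div_nonneg (by linarith) hak.le
      linarith
    have hτ1 : τ ≤ 1 := by
      rw [hτ]
      have h5 : ((n:ℝ)*lam - F (k-1))/|a k| ≤ 1-β := by
        rw [div_le_iff₀ hak]
        rw [hstep] at hPk; linarith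
      linarith
    set t : ℕ → ℝ := fun i => if i < k then 1 else if i = k then τ else β with htdef
    have ht_lt : ∀ i, i < k → t i = 1 := by
      intro i h; rw [htdef]; simp [h]
    have ht_eq : t k = τ := by
      rw [htdef]; simp
    have ht_gt : ∀ i, k < i → t i = β := by
      intro i h
      rw [htdef]
      simp only
      rw [if_neg (by omega), if_neg (by omega)]
    refine ⟨1/(2*|a k|), t, by positivity, ?_, ?_, ?_⟩
    · -- range of t
      intro i _
      rcases lt_trichotomy i k with h | h | h
      · rw [ht_lt i h]; norm_num
      · rw [h, ht_eq]; exact ⟨le_trans hβ0 hτβ, hτ1⟩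
      · rw [ht_gt i h]; exact ⟨hβ0, hβ1.le⟩
    · -- the sum equals n * lam
      rw [sum_split3 _ k n hk1 hkn]
      have e1 : ∑ i ∈ Finset.Icc 1 (k-1), t i * |a i| = ∑ i ∈ Finset.Icc 1 (k-1), |a i| := by
        apply Finset.sum_congr rfl
        intro i hi
        rw [Finset.mem_Icc] at hi
        rw [ht_lt i (by omega), one_mul]
      have e2 : ∑ i ∈ Finset.Icc (k+1) n, t i * |a i|
          = β * ∑ i ∈ Finset.Icc (k+1) n, |a i| := by
        rw [Finset.mul_sum]
        apply Finset.sum_congr rfl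
        intro i hi
        rw [Finset.mem_Icc] at hi
        rw [ht_gt i (by omega)]
      rw [e1, e2, ht_eq]
      have hFk1e : F (k-1) = (∑ i ∈ Finset.Icc 1 (k-1), |a i|) + β * |a k|
          + β * ∑ i ∈ Finset.Icc (k+1) n, |a i| := by
        rw [hF]
        simp only
        rcases hbot k with h2 | h2
        · rw [show k-1+1 = k by omega, h2]; ring
        · omega
      have hdiv : ((n:ℝ)*lam - F (k-1))/|a k| * |a k| = (n:ℝ)*lam - F (k-1) := by
        field_simp
      rw [hτ]
      have expand : (β + ((n:ℝ)*lam - F (k-1))/|a k|)*|a k|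
          = β*|a k| + ((n:ℝ)*lam - F (k-1)) := by rw [add_mul, hdiv]
      rw [expand]
      linarith [hFk1e]
    · -- regimes
      intro i hi
      rw [Finset.mem_Icc] at hi
      rcases lt_trichotomy i k with h1 | h1 | h1
      · left
        refine ⟨ht_lt i h1, ?_⟩
        have hord' : |a k| ≤ |a i| := hord i k hi.1 (by omega) hkn
        rw [div_mul_eq_mul_div, le_div_iff₀ (by positivity)]
        linarith
      · right; right; left
        subst h1
        rw [ht_eq]
        have hm : 1/(2*|a i|) * |a i| = 1/2 := by field_simp
        exact ⟨hm, hτβ, hτ1⟩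
      · right; left
        rw [ht_gt i h1]
        have hord' : |a i| ≤ |a k| := hord k i hk1 (by omega) hi.2
        refine ⟨by positivity, ?_, rfl⟩
        rw [div_mul_eq_mul_div, div_le_iff₀ (by positivity)]
        linarith
/-- Per-coordinate lower bound on the loss. -/
lemma termGeMin (α p g z : ℝ) (hα : 0 < α) (hp0 : 0 ≤ p) (hp1 : p ≤ 1)
    (hg : |g| ≤ 1) (hz : |z| ≤ 1) :
    min α ((1/2)*(1-|z|)) ≤ p*α + (1/2)*(1-p)*(1-g*z) := by
  have h1 : g*z ≤ |z| := by
    calc g*z ≤ |g*z| := le_abs_self _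
      _ = |g| * |z| := abs_mul _ _
      _ ≤ 1 * |z| := mul_le_mul_of_nonneg_right hg (abs_nonneg _)
      _ = |z| := one_mul _
  have h2 : min α ((1/2)*(1-|z|)) ≤ α := min_le_left _ _
  have h3 : min α ((1/2)*(1-|z|)) ≤ (1/2)*(1-|z|) := min_le_right _ _
  nlinarith [mul_nonneg hp0 (sub_nonneg.mpr h2),
    mul_nonneg (by linarith : (0:ℝ) ≤ 1-p)
      (by linarith : (0:ℝ) ≤ (1/2)*(1-g*z) - min α ((1/2)*(1-|z|)))]

lemma termBounds (α p g z : ℝ) (hα : 0 < α) (hp0 : 0 ≤ p) (hp1 : p ≤ 1)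
    (hg : |g| ≤ 1) (hz : |z| ≤ 1) :
    0 ≤ p*α + (1/2)*(1-p)*(1-g*z) ∧ p*α + (1/2)*(1-p)*(1-g*z) ≤ α + 1 := by
  have h1 : g*z ≤ |z| := by
    calc g*z ≤ |g*z| := le_abs_self _
      _ = |g| * |z| := abs_mul _ _
      _ ≤ 1 * |z| := mul_le_mul_of_nonneg_right hg (abs_nonneg _)
      _ = |z| := one_mul _
  have h1' : -(1:ℝ) ≤ g*z := by
    have : -(g*z) ≤ |z| := by
      calc -(g*z) ≤ |g*z| := neg_le_abs _
        _ = |g| * |z| := abs_mul _ _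
        _ ≤ 1 * |z| := mul_le_mul_of_nonneg_right hg (abs_nonneg _)
        _ = |z| := one_mul _
    linarith
  constructor
  · have := mul_nonneg (by linarith : (0:ℝ) ≤ (1/2)*(1-p)) (by linarith : (0:ℝ) ≤ 1-g*z)
    nlinarith
  · nlinarith [mul_nonneg hp0 hα.le]

/-- The optimal strategy: existence of `p`, `g` whose worst-case loss is at most
the dual value at a feasible `zs`. -/
lemma abstStrategy (n : ℕ) (hn : 1 ≤ n) (a : ℕ → ℝ)
    (hord : ∀ i j : ℕ, 1 ≤ i → i ≤ j → j ≤ n → |a j| ≤ |a i|)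
    (lam : ℝ) (hlam_pos : 0 < lam)
    (hlam_le : lam ≤ (1 / (n : ℝ)) * ∑ i ∈ Icc 1 n, |a i|)
    (α : ℝ) (hα : 0 < α) :
    ∃ p g : ℕ → ℝ, (∀ i ∈ Icc 1 n, 0 ≤ p i ∧ p i ≤ 1) ∧ (∀ i ∈ Icc 1 n, |g i| ≤ 1) ∧
      ∃ zs : ℕ → ℝ, (∀ i ∈ Icc 1 n, |zs i| ≤ 1) ∧
        lam ≤ (1 / (n : ℝ)) * ∑ i ∈ Icc 1 n, zs i * a i ∧
        ∀ z : ℕ → ℝ, (∀ i ∈ Icc 1 n, |z i| ≤ 1) →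
          lam ≤ (1 / (n : ℝ)) * ∑ i ∈ Icc 1 n, z i * a i →
          Labst n α p g z ≤ (1 / (n : ℝ)) * ∑ i ∈ Icc 1 n, min α ((1/2)*(1-|zs i|)) := by
  classical
  have hN : (0:ℝ) < (n:ℝ) := by exact_mod_cast hn
  obtain ⟨μ, t, hμ, ht, hsum, hreg⟩ := abstMuT n hn a hord lam hlam_pos hlam_le α hα
  set p : ℕ → ℝ := fun i => pOpt α (μ * |a i|) with hpdef
  set g : ℕ → ℝ := fun i =>
    (if a i < 0 then (-1:ℝ) else 1) * min 1 ((μ * |a i|) / ((1 - p i)/2)) with hgdef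
  set zs : ℕ → ℝ := fun i => (if a i < 0 then (-1:ℝ) else 1) * t i with hzsdef
  have hpm : ∀ i, 0 ≤ p i ∧ p i ≤ 1 := fun i =>
    pOpt_mem α _ (mul_nonneg hμ (abs_nonneg _))
  have hsga : ∀ i, (if a i < 0 then (-1:ℝ) else 1) * a i = |a i| := by
    intro i
    rcases lt_or_ge (a i) 0 with h | h
    · rw [if_pos h, abs_of_neg h]; ring
    · rw [if_neg (not_lt.mpr h), abs_of_nonneg h]; ring
  have habsg : ∀ i, |(if a i < 0 then (-1:ℝ) else 1)| = 1 := by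
    intro i; split <;> simp
  refine ⟨p, g, fun i _ => hpm i, ?_, zs, ?_, ?_, ?_⟩
  · -- |g| ≤ 1
    intro i _
    rw [hgdef]
    simp only
    rw [abs_mul, habsg, one_mul]
    have hx : 0 ≤ (μ * |a i|) / ((1 - p i)/2) :=
      div_nonneg (mul_nonneg hμ (abs_nonneg _)) (by linarith [(hpm i).2])
    rw [abs_of_nonneg (le_min zero_le_one hx)]
    exact min_le_left _ _
  · -- |zs| ≤ 1
    intro i hi
    rw [hzsdef]
    simp only
    rw [abs_mul, habsg, one_mul, abs_of_nonneg (ht i hi).1]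
    exact (ht i hi).2
  · -- feasibility of zs
    have : ∑ i ∈ Icc 1 n, zs i * a i = ∑ i ∈ Icc 1 n, t i * |a i| := by
      apply Finset.sum_congr rfl
      intro i _
      rw [hzsdef]
      simp only
      rw [show (if a i < 0 then (-1:ℝ) else 1) * t i * a i
        = t i * ((if a i < 0 then (-1:ℝ) else 1) * a i) by ring, hsga i]
    rw [this, hsum]
    rw [show (1/(n:ℝ)) * ((n:ℝ)*lam) = lam by field_simp]
  · -- the main inequality
    intro z hz hzfeas
    have hNlam : (n:ℝ)*lam ≤ ∑ i ∈ Icc 1 n, z i * a i := by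
      rw [div_mul_eq_mul_div, one_mul, le_div_iff₀ hN] at hzfeas
      linarith
    have key : ∀ i ∈ Icc 1 n,
        (p i * α + (1/2)*(1-p i)*(1 - g i * z i)) + μ * (a i * z i)
          ≤ min α ((1/2)*(1-t i)) + μ * (t i * |a i|) := by
      intro i hi
      have h1 := abstReduce α μ (a i) (p i) (z i) hμ (hpm i).1 (hpm i).2 (hz i hi)
      have h2 := abstKey α (μ * |a i|) (t i) hα (hreg i hi)
      have hpp : p i = pOpt α (μ * |a i|) := rfl
      rw [← hpp] at h2
      calc (p i * α + (1/2)*(1-p i)*(1 - g i * z i)) + μ * (a i * z i)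
          = p i * α + 1/2*(1-p i)*(1 - g i * z i) + μ * (a i) * (z i) := by ring
        _ ≤ p i * α + max ((1 - p i)/2) (μ * |a i|) := h1
        _ ≤ min α ((1/2)*(1-t i)) + μ * |a i| * t i := h2
        _ = min α ((1/2)*(1-t i)) + μ * (t i * |a i|) := by ring
    have hsum2 := Finset.sum_le_sum key
    have eL1 : ∑ i ∈ Icc 1 n, ((p i * α + (1/2)*(1-p i)*(1 - g i * z i)) + μ * (a i * z i))
        = (∑ i ∈ Icc 1 n, (p i * α + (1/2)*(1-p i)*(1 - g i * z i)))
          + ∑ i ∈ Icc 1 n, μ * (a i * z i) := Finset.sum_add_distrib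
    have eL2 : ∑ i ∈ Icc 1 n, μ * (a i * z i) = μ * ∑ i ∈ Icc 1 n, z i * a i := by
      rw [Finset.mul_sum]
      exact Finset.sum_congr rfl (fun i _ => by ring)
    have eR1 : ∑ i ∈ Icc 1 n, (min α ((1/2)*(1-t i)) + μ * (t i * |a i|))
        = (∑ i ∈ Icc 1 n, min α ((1/2)*(1-t i)))
          + ∑ i ∈ Icc 1 n, μ * (t i * |a i|) := Finset.sum_add_distrib
    have eR2 : ∑ i ∈ Icc 1 n, μ * (t i * |a i|) = μ * ((n:ℝ)*lam) := by
      rw [← hsum, Finset.mul_sum]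
    rw [eL1, eL2, eR1, eR2] at hsum2
    have h5 : μ * ((n:ℝ)*lam) ≤ μ * ∑ i ∈ Icc 1 n, z i * a i :=
      mul_le_mul_of_nonneg_left hNlam hμ
    have h6 : ∑ i ∈ Icc 1 n, (p i * α + (1/2)*(1-p i)*(1 - g i * z i))
        ≤ ∑ i ∈ Icc 1 n, min α ((1/2)*(1-t i)) := by linarith
    have e7 : ∑ i ∈ Icc 1 n, min α ((1/2)*(1-t i))
        = ∑ i ∈ Icc 1 n, min α ((1/2)*(1-|zs i|)) := by
      apply Finset.sum_congr rfl
      intro i hi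
      rw [hzsdef]
      simp only
      rw [abs_mul, habsg, one_mul, abs_of_nonneg (ht i hi).1]
    rw [e7] at h6
    unfold Labst
    apply mul_le_mul_of_nonneg_left _ (by positivity : (0:ℝ) ≤ 1/(n:ℝ))
    exact h6
lemma Labst_bounds (n : ℕ) (hn : 1 ≤ n) (α : ℝ) (hα : 0 < α) (p g z : ℕ → ℝ)
    (hp : ∀ i ∈ Icc 1 n, 0 ≤ p i ∧ p i ≤ 1) (hg : ∀ i ∈ Icc 1 n, |g i| ≤ 1)
    (hz : ∀ i ∈ Icc 1 n, |z i| ≤ 1) :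
    0 ≤ Labst n α p g z ∧ Labst n α p g z ≤ α + 1 := by
  have hN : (0:ℝ) < (n:ℝ) := by exact_mod_cast hn
  have hcard : (Finset.Icc 1 n).card = n := by rw [Nat.card_Icc]; omega
  unfold Labst
  constructor
  · apply mul_nonneg (by positivity)
    apply Finset.sum_nonneg
    intro i hi
    exact (termBounds α (p i) (g i) (z i) hα (hp i hi).1 (hp i hi).2 (hg i hi) (hz i hi)).1
  · have h1 : ∑ i ∈ Icc 1 n, (p i * α + (1/2)*(1-p i)*(1-g i * z i)) ≤ (n:ℝ) * (α+1) := by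
      calc ∑ i ∈ Icc 1 n, (p i * α + (1/2)*(1-p i)*(1-g i * z i))
          ≤ ∑ _i ∈ Icc 1 n, (α+1) := Finset.sum_le_sum (fun i hi =>
            (termBounds α (p i) (g i) (z i) hα (hp i hi).1 (hp i hi).2
              (hg i hi) (hz i hi)).2)
        _ = (n:ℝ) * (α+1) := by rw [Finset.sum_const, hcard, nsmul_eq_mul]
    calc (1/(n:ℝ)) * ∑ i ∈ Icc 1 n, (p i * α + (1/2)*(1-p i)*(1-g i * z i))
        ≤ (1/(n:ℝ)) * ((n:ℝ)*(α+1)) := mul_le_mul_of_nonneg_left h1 (by positivity)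
      _ = α + 1 := by field_simp

lemma fval_le (n : ℕ) (hn : 1 ≤ n) (α : ℝ) (hα : 0 < α) (z : ℕ → ℝ) :
    (1/(n:ℝ)) * ∑ i ∈ Icc 1 n, min α ((1/2)*(1-|z i|)) ≤ α := by
  have hN : (0:ℝ) < (n:ℝ) := by exact_mod_cast hn
  have hcard : (Finset.Icc 1 n).card = n := by rw [Nat.card_Icc]; omega
  have h1 : ∑ i ∈ Icc 1 n, min α ((1/2)*(1-|z i|)) ≤ (n:ℝ) * α := by
    calc ∑ i ∈ Icc 1 n, min α ((1/2)*(1-|z i|))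
        ≤ ∑ _i ∈ Icc 1 n, α := Finset.sum_le_sum (fun i _ => min_le_left _ _)
      _ = (n:ℝ) * α := by rw [Finset.sum_const, hcard, nsmul_eq_mul]
  calc (1/(n:ℝ)) * ∑ i ∈ Icc 1 n, min α ((1/2)*(1-|z i|))
      ≤ (1/(n:ℝ)) * ((n:ℝ)*α) := mul_le_mul_of_nonneg_left h1 (by positivity)
    _ = α := by field_simp

/-- dual form of the abstain game. -/
theorem abstain_game_dual_form
    (n : ℕ) (hn : 1 ≤ n) (a : ℕ → ℝ)
    (hord : ∀ i j : ℕ, 1 ≤ i → i ≤ j → j ≤ n → |a j| ≤ |a i|)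
    (lam : ℝ) (hlam_pos : 0 < lam)
    (hlam_le : lam ≤ (1 / (n : ℝ)) * ∑ i ∈ Icc 1 n, |a i|)
    (α : ℝ) (hα : 0 < α) :
    Vabst n a lam α =
      sSup {x : ℝ | ∃ z : ℕ → ℝ, (∀ i ∈ Icc 1 n, |z i| ≤ 1) ∧
        lam ≤ (1 / (n : ℝ)) * ∑ i ∈ Icc 1 n, z i * a i ∧
        x = (1 / (n : ℝ)) * ∑ i ∈ Icc 1 n, min α ((1 / 2) * (1 - |z i|))} := by
  classical
  have hN : (0:ℝ) < (n:ℝ) := by exact_mod_cast hn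
  -- the all-ones (sign-matched) label vector is feasible
  set z0 : ℕ → ℝ := fun i => if a i < 0 then (-1:ℝ) else 1 with hz0def
  have hz0a : ∀ i ∈ Icc 1 n, |z0 i| ≤ 1 := by
    intro i _
    rw [hz0def]
    simp only
    split <;> simp
  have hz0b : lam ≤ (1/(n:ℝ)) * ∑ i ∈ Icc 1 n, z0 i * a i := by
    have : ∑ i ∈ Icc 1 n, z0 i * a i = ∑ i ∈ Icc 1 n, |a i| := by
      apply Finset.sum_congr rfl
      intro i _
      rw [hz0def]
      simp only
      rcases lt_or_ge (a i) 0 with h | h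
      · rw [if_pos h, abs_of_neg h]; ring
      · rw [if_neg (not_lt.mpr h), abs_of_nonneg h]; ring
    rw [this]; exact hlam_le
  -- boundedness of the dual set
  have hZSbdd : BddAbove {x : ℝ | ∃ z : ℕ → ℝ, (∀ i ∈ Icc 1 n, |z i| ≤ 1) ∧
      lam ≤ (1 / (n : ℝ)) * ∑ i ∈ Icc 1 n, z i * a i ∧
      x = (1 / (n : ℝ)) * ∑ i ∈ Icc 1 n, min α ((1 / 2) * (1 - |z i|))} := by
    refine ⟨α, ?_⟩
    rintro x ⟨z, hz1, hz2, rfl⟩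
    exact fval_le n hn α hα z
  have hZSne : {x : ℝ | ∃ z : ℕ → ℝ, (∀ i ∈ Icc 1 n, |z i| ≤ 1) ∧
      lam ≤ (1 / (n : ℝ)) * ∑ i ∈ Icc 1 n, z i * a i ∧
      x = (1 / (n : ℝ)) * ∑ i ∈ Icc 1 n, min α ((1 / 2) * (1 - |z i|))}.Nonempty :=
    ⟨_, z0, hz0a, hz0b, rfl⟩
  -- boundedness of inner sets
  have hinnerBdd : ∀ p g : ℕ → ℝ, (∀ i ∈ Icc 1 n, 0 ≤ p i ∧ p i ≤ 1) →
      (∀ i ∈ Icc 1 n, |g i| ≤ 1) →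
      BddAbove {y : ℝ | ∃ z : ℕ → ℝ, (∀ i ∈ Icc 1 n, |z i| ≤ 1) ∧
        lam ≤ (1 / (n : ℝ)) * ∑ i ∈ Icc 1 n, z i * a i ∧ y = Labst n α p g z} := by
    intro p g hp hg
    refine ⟨α + 1, ?_⟩
    rintro y ⟨z, hz1, hz2, rfl⟩
    exact (Labst_bounds n hn α hα p g z hp hg hz1).2
  have hinnerNe : ∀ p g : ℕ → ℝ,
      {y : ℝ | ∃ z : ℕ → ℝ, (∀ i ∈ Icc 1 n, |z i| ≤ 1) ∧
        lam ≤ (1 / (n : ℝ)) * ∑ i ∈ Icc 1 n, z i * a i ∧ y = Labst n α p g z}.Nonempty :=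
    fun p g => ⟨_, z0, hz0a, hz0b, rfl⟩
  -- the strategy set is bounded below by 0
  have hIbdd : BddBelow {x : ℝ | ∃ p : ℕ → ℝ, (∀ i ∈ Icc 1 n, 0 ≤ p i ∧ p i ≤ 1) ∧
      ∃ g : ℕ → ℝ, (∀ i ∈ Icc 1 n, |g i| ≤ 1) ∧
        x = sSup {y : ℝ | ∃ z : ℕ → ℝ, (∀ i ∈ Icc 1 n, |z i| ≤ 1) ∧
          lam ≤ (1 / (n : ℝ)) * ∑ i ∈ Icc 1 n, z i * a i ∧
          y = Labst n α p g z}} := by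
    refine ⟨0, ?_⟩
    rintro x ⟨p, hp, g, hg, rfl⟩
    have h1 : Labst n α p g z0 ≤ sSup _ :=
      le_csSup (hinnerBdd p g hp hg) (⟨z0, hz0a, hz0b, rfl⟩ :
        Labst n α p g z0 ∈ {y : ℝ | ∃ z : ℕ → ℝ, (∀ i ∈ Icc 1 n, |z i| ≤ 1) ∧
          lam ≤ (1 / (n : ℝ)) * ∑ i ∈ Icc 1 n, z i * a i ∧ y = Labst n α p g z})
    exact le_trans (Labst_bounds n hn α hα p g z0 hp hg hz0a).1 h1
  apply le_antisymm
  · -- Vabst ≤ sSup ZS, via the optimal strategy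
    obtain ⟨p, g, hp, hg, zs, hzs1, hzs2, hkey⟩ :=
      abstStrategy n hn a hord lam hlam_pos hlam_le α hα
    unfold Vabst
    have hmemI : sSup {y : ℝ | ∃ z : ℕ → ℝ, (∀ i ∈ Icc 1 n, |z i| ≤ 1) ∧
        lam ≤ (1 / (n : ℝ)) * ∑ i ∈ Icc 1 n, z i * a i ∧ y = Labst n α p g z}
        ∈ {x : ℝ | ∃ p : ℕ → ℝ, (∀ i ∈ Icc 1 n, 0 ≤ p i ∧ p i ≤ 1) ∧
          ∃ g : ℕ → ℝ, (∀ i ∈ Icc 1 n, |g i| ≤ 1) ∧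
            x = sSup {y : ℝ | ∃ z : ℕ → ℝ, (∀ i ∈ Icc 1 n, |z i| ≤ 1) ∧
              lam ≤ (1 / (n : ℝ)) * ∑ i ∈ Icc 1 n, z i * a i ∧
              y = Labst n α p g z}} := ⟨p, hp, g, hg, rfl⟩
    apply le_trans (csInf_le hIbdd hmemI)
    apply csSup_le (hinnerNe p g)
    rintro y ⟨z, hz1, hz2, rfl⟩
    calc Labst n α p g z
        ≤ (1/(n:ℝ)) * ∑ i ∈ Icc 1 n, min α ((1/2)*(1-|zs i|)) := hkey z hz1 hz2
      _ ≤ _ := le_csSup hZSbdd ⟨zs, hzs1, hzs2, rfl⟩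
  · -- sSup ZS ≤ Vabst
    unfold Vabst
    apply le_csInf
    · exact ⟨_, (fun _ => 0), fun i _ => by norm_num, (fun _ => 0),
        fun i _ => by norm_num, rfl⟩
    · rintro x ⟨p, hp, g, hg, rfl⟩
      apply csSup_le hZSne
      rintro y ⟨z, hz1, hz2, rfl⟩
      have h1 : (1/(n:ℝ)) * ∑ i ∈ Icc 1 n, min α ((1/2)*(1-|z i|)) ≤ Labst n α p g z := by
        unfold Labst
        apply mul_le_mul_of_nonneg_left _ (by positivity : (0:ℝ) ≤ 1/(n:ℝ))
        apply Finset.sum_le_sum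
        intro i hi
        exact termGeMin α (p i) (g i) (z i) hα (hp i hi).1 (hp i hi).2 (hg i hi) (hz1 i hi)
      exact le_trans h1 (le_csSup (hinnerBdd p g hp hg) ⟨z, hz1, hz2, rfl⟩)
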